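/- (Archimedes, On Conoids and Spheroids 7.) Given an ellipse and a point O on the line through its center perpendicular to its plane, there exists a circular cone with vertex O containing the ellipse: let a ≥ b > 0, let E = {(x, y, 0) ∈ ℝ³ : x²/a² + y²/b² = 1}, and let O = (0, 0, h) with h ≠ 0. Then there exist a point w ∈ ℝ³, a radius r > 0, and an affine plane Π ⊆ ℝ³ with O ∉ Π, such that the circle C = Π ∩ {v ∈ ℝ³ : ‖v − w‖ = r} is nonempty and, for every p ∈ E, there exists q ∈ C collinear with O and p (i.e., q lies on the straight line through O and p). -/

import Mathlib

open scoped RealInnerProductSpace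

/-- The vertex `O = (0, 0, h)` as a point of `EuclideanSpace ℝ (Fin 3)`. -/
noncomputable def coneVertex (h : ℝ) : EuclideanSpace ℝ (Fin 3) :=
  (WithLp.equiv 2 (Fin 3 → ℝ)).symm ![0, 0, h]

/-!
Cut the cone over the ellipse with vertex `O = (0, 0, h)` by a plane `z = β y` through the
major axis. A point `(X, Y, β Y)` of that plane lies on the cone iff its central projection
`(X, Y, 0) · h / (h - β Y)` from `O` lies on the ellipse, i.e. iff
`X² / a² + Y² / b² = (1 - β Y / h)²`. In plane coordinates `(X, Y √(1 + β²))` the two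
quadratic terms have equal coefficients exactly when `β² = h² (a² - b²) / (b² (a² + h²))`,
which is possible because `a ≥ b`; completing the square in `Y` then shows that the section
is the circle with centre `(0, -k, -β k)`, `k = β a² / (h (1 + β²))`, and radius
`√(a² + (1 + β²) k²)`.
-/

/-- The plane `z = β y` cuts the cone over the ellipse `x² / a² + y² / b² = 1` with vertex
`(0, 0, h)` in a circle. -/
def IsCircularSectionSlope (a b h β : ℝ) : Prop :=
  a ^ 2 * (h ^ 2 - β ^ 2 * b ^ 2) = b ^ 2 * h ^ 2 * (1 + β ^ 2)

namespace IsCircularSectionSlope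

variable {a b h β : ℝ}

theorem exists_of_le (hba : b ≤ a) (hb : 0 < b) : ∃ β, IsCircularSectionSlope a b h β := by
  have hβ₀ : 0 ≤ h ^ 2 * (a ^ 2 - b ^ 2) / (b ^ 2 * (a ^ 2 + h ^ 2)) := by
    have : 0 ≤ a ^ 2 - b ^ 2 := by nlinarith
    positivity
  refine ⟨√(h ^ 2 * (a ^ 2 - b ^ 2) / (b ^ 2 * (a ^ 2 + h ^ 2))), ?_⟩
  have ha : 0 < a := hb.trans_le hba
  rw [IsCircularSectionSlope, Real.sq_sqrt hβ₀]
  field_simp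
  ring

theorem add_mul_ne_zero (hβ : IsCircularSectionSlope a b h β) (hb : b ≠ 0) (hh : h ≠ 0)
    {y : ℝ} (hy : y ^ 2 ≤ b ^ 2) : h + β * y ≠ 0 := by
  unfold IsCircularSectionSlope at hβ
  have hβb : β ^ 2 * b ^ 2 < h ^ 2 := by
    have : 0 < a ^ 2 * (h ^ 2 - β ^ 2 * b ^ 2) := by
      rw [hβ]
      positivity
    nlinarith [sq_nonneg a]
  intro hzero
  have : (β * y) ^ 2 = h ^ 2 := by rw [eq_neg_of_add_eq_zero_right hzero, neg_sq]
  nlinarith [mul_le_mul_of_nonneg_left hy (sq_nonneg β)]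

theorem sq_add_sq_eq (hβ : IsCircularSectionSlope a b h β) (hb : b ≠ 0) (hh : h ≠ 0)
    {k x y t : ℝ} (hk : k * (h * (1 + β ^ 2)) = β * a ^ 2)
    (hxy : b ^ 2 * x ^ 2 + a ^ 2 * y ^ 2 = a ^ 2 * b ^ 2) (ht : t * (h + β * y) = h) :
    (t * x) ^ 2 + (1 + β ^ 2) * (t * y + k) ^ 2 = a ^ 2 + (1 + β ^ 2) * k ^ 2 := by
  unfold IsCircularSectionSlope at hβ
  have : b ^ 2 * h ^ 2 * ((t * x) ^ 2 + (1 + β ^ 2) * (t * y + k) ^ 2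
      - (a ^ 2 + (1 + β ^ 2) * k ^ 2)) = 0 := by
    linear_combination h ^ 2 * t ^ 2 * hxy - (t * y) ^ 2 * hβ + 2 * b ^ 2 * h * t * y * hk
      + a ^ 2 * b ^ 2 * (t * h + h - β * t * y) * ht
  linear_combination (mul_eq_zero.1 this).resolve_left (by positivity)

end IsCircularSectionSlope

theorem coneVertex_eq (h : ℝ) : coneVertex h = !₂[0, 0, h] := rfl

namespace EuclideanSpace

theorem inner_vec3 (x y z x' y' z' : ℝ) :
    ⟪!₂[x, y, z], !₂[x', y', z']⟫ = x * x' + y * y' + z * z' := by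
  simp [PiLp.inner_apply, Fin.sum_univ_three]
  ring

theorem norm_vec3 (x y z : ℝ) : ‖!₂[x, y, z]‖ = √(x ^ 2 + y ^ 2 + z ^ 2) := by
  simp [EuclideanSpace.norm_eq, Fin.sum_univ_three]

theorem vec3_sub_vec3 (x y z x' y' z' : ℝ) :
    !₂[x, y, z] - !₂[x', y', z'] = !₂[x - x', y - y', z - z'] := by
  ext i
  fin_cases i <;> simp

end EuclideanSpace

open EuclideanSpace

theorem lineMap_coneVertex {h : ℝ} {p : EuclideanSpace ℝ (Fin 3)} (hp : p 2 = 0) (t : ℝ) :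
    AffineMap.lineMap (coneVertex h) p t = !₂[t * p 0, t * p 1, (1 - t) * h] := by
  ext i
  fin_cases i <;> simp [AffineMap.lineMap_apply_module, coneVertex_eq, hp]

theorem vec3_mem_plane_inter_sphere {β k r X Y : ℝ} (hr : 0 ≤ r)
    (hXY : X ^ 2 + (1 + β ^ 2) * (Y + k) ^ 2 = r ^ 2) :
    !₂[X, Y, β * Y] ∈ {v : EuclideanSpace ℝ (Fin 3) | ⟪v, !₂[0, -β, 1]⟫ = 0} ∩
      {v : EuclideanSpace ℝ (Fin 3) | ‖v - !₂[0, -k, -(β * k)]‖ = r} := by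
  refine ⟨by simp only [Set.mem_ofPred_eq, inner_vec3]; ring, ?_⟩
  have : (X - 0) ^ 2 + (Y - -k) ^ 2 + (β * Y - -(β * k)) ^ 2 = r ^ 2 := by
    linear_combination hXY
  rw [Set.mem_ofPred_eq, vec3_sub_vec3, norm_vec3, this, Real.sqrt_sq hr]

/-- Archimedes, On Conoids and Spheroids 7: given the ellipse
`E = {(x, y, 0) : x²/a² + y²/b² = 1}` (with `a ≥ b > 0`) and a point `O = (0, 0, h)`,
`h ≠ 0`, on the line through its center perpendicular to its plane, there is a circular
cone with vertex `O` containing the ellipse: there are a circle `C` (a nonempty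
intersection of a sphere with an affine plane `Π = {v : ⟪v, n⟫ = δ}` not containing `O`)
such that every point of `E` is collinear with `O` and some point of `C`. -/
theorem archimedes_cone_through_ellipse (a b h : ℝ) (hba : b ≤ a) (hb : 0 < b)
    (hh : h ≠ 0) :
    ∃ (w : EuclideanSpace ℝ (Fin 3)) (r : ℝ) (n : EuclideanSpace ℝ (Fin 3)) (δ : ℝ),
      0 < r ∧ n ≠ 0 ∧ ⟪coneVertex h, n⟫ ≠ δ ∧
      ({v : EuclideanSpace ℝ (Fin 3) | ⟪v, n⟫ = δ} ∩
        {v : EuclideanSpace ℝ (Fin 3) | ‖v - w‖ = r}).Nonempty ∧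
      ∀ p : EuclideanSpace ℝ (Fin 3),
        p 2 = 0 → (p 0) ^ 2 / a ^ 2 + (p 1) ^ 2 / b ^ 2 = 1 →
        ∃ q ∈ {v : EuclideanSpace ℝ (Fin 3) | ⟪v, n⟫ = δ} ∩
            {v : EuclideanSpace ℝ (Fin 3) | ‖v - w‖ = r},
          Collinear ℝ {coneVertex h, p, q} := by
  have ha : 0 < a := hb.trans_le hba
  obtain ⟨β, hβ⟩ := IsCircularSectionSlope.exists_of_le (h := h) hba hb
  set k := β * a ^ 2 / (h * (1 + β ^ 2))
  have hk : k * (h * (1 + β ^ 2)) = β * a ^ 2 := div_mul_cancel₀ _ (by positivity)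
  set r := √(a ^ 2 + (1 + β ^ 2) * k ^ 2)
  have hr : 0 < r := Real.sqrt_pos.2 (by positivity)
  have hr2 : r ^ 2 = a ^ 2 + (1 + β ^ 2) * k ^ 2 := Real.sq_sqrt (by positivity)
  refine ⟨!₂[0, -k, -(β * k)], r, !₂[0, -β, 1], 0, hr, fun hn ↦ by simpa using congrArg (· 2) hn,
    by simpa [coneVertex_eq, inner_vec3] using hh,
    ⟨_, vec3_mem_plane_inter_sphere (X := r) (Y := -k) hr.le (by ring)⟩, ?_⟩
  intro p hp2 hpE
  have hxy : b ^ 2 * p 0 ^ 2 + a ^ 2 * p 1 ^ 2 = a ^ 2 * b ^ 2 := by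
    field_simp at hpE
    linarith
  have hden := hβ.add_mul_ne_zero hb.ne' hh (y := p 1)
    (by nlinarith [mul_nonneg (sq_nonneg b) (sq_nonneg (p 0)), pow_pos ha 2])
  set t := h / (h + β * p 1)
  have ht : t * (h + β * p 1) = h := div_mul_cancel₀ _ hden
  refine ⟨AffineMap.lineMap (coneVertex h) p t, ?_, collinear_triple_of_mem_affineSpan_pair
    (left_mem_affineSpan_pair ..) (right_mem_affineSpan_pair ..)
    (AffineMap.lineMap_mem_affineSpan_pair ..)⟩
  rw [lineMap_coneVertex hp2, show (1 - t) * h = β * (t * p 1) by linear_combination -ht]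
  exact vec3_mem_plane_inter_sphere hr.le (by rw [hr2]; exact hβ.sq_add_sq_eq hb.ne' hh hk hxy ht)
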